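/- The function η is right-differentiable at s=1 along the unit circle, with lim_{λ→0⁺} (η(e^{iλ}) − 1)/(e^{iλ} − 1) = i·√( Σ p_{k,ℓ}(k−ℓ)² / Σ p_{k,ℓ}(k+ℓ)² ). Consequently the curve S₁ has a corner point at 1 whose interior angle equals θ = arccos( −Σ kℓ p_{k,ℓ} / (√(Σ k² p_{k,ℓ}) · √(Σ ℓ² p_{k,ℓ})) ). -/

import Mathlib

/-!
On the surface `x = z e^{iλ}`, `y = z e^{-iλ}` (`z`, `λ` real), the symmetry (H1) makes
the kernel a real function `kernelDiag z λ`. Along a line `z = 1 + t|λ|` it vanishes to second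
order at `λ = 0` (by (H4)), with second derivative `Σ p (k - ℓ)² - t² Σ p (k + ℓ)²`. Hence for
`|t|` slightly above, resp. below, the slope `r` it is negative, resp. positive, for small `λ`,
and the intermediate value theorem traps the root `η(e^{iλ})` between `1 - (r ± ε)|λ|`. So
`η(e^{iλ}) = 1 - r|λ| + o(λ)`, the curve `λ ↦ η(e^{iλ}) e^{iλ}` leaves `1` in the directions
`-r ± i`, and their angle is read off from the second moments of the walk.
-/

open Complex Filter Set Topology MeasureTheory

/-- A zero-drift symmetric random walk in the quadrant with small positive jumps,
encoding hypotheses (H1)-(H4) of the paper. -/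
structure QuadrantWalk where
  /-- the transition weights `p_{k,ℓ}`, finitely supported -/
  p : ℤ × ℤ →₀ ℝ
  nonneg : ∀ kl, 0 ≤ p kl
  sum_one : ∑ kl ∈ p.support, p kl = 1
  /-- (H1) symmetry -/
  symm : ∀ k l : ℤ, p (k, l) = p (l, k)
  /-- (H2) small positive jumps -/
  small : ∀ k l : ℤ, 2 ≤ k ∨ 2 ≤ l → p (k, l) = 0
  /-- (H3) irreducibility -/
  irred : ∀ x y : ℂ,
      ‖x‖ = 1 → ‖y‖ = 1 →
      ‖∑ kl ∈ p.support, (p kl : ℂ) * x ^ kl.1 * y ^ kl.2‖ = 1 →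
      x = 1 ∧ y = 1
  /-- (H4) zero drift, first coordinate -/
  drift1 : ∑ kl ∈ p.support, (kl.1 : ℝ) * p kl = 0
  /-- (H4) zero drift, second coordinate -/
  drift2 : ∑ kl ∈ p.support, (kl.2 : ℝ) * p kl = 0

/-- The kernel `K(x,y) = xy(1 - Σ p_{k,ℓ} x^{-k} y^{-ℓ})`, written as a polynomial in
`x, y` (by (H2), on the support `k ≤ 1` and `ℓ ≤ 1`, so the exponents `1-k, 1-ℓ` are
nonnegative). -/
noncomputable def QuadrantWalk.K (w : QuadrantWalk) (x y : ℂ) : ℂ :=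
  x * y - ∑ kl ∈ w.p.support, (w.p kl : ℂ) * x ^ (1 - kl.1).toNat * y ^ (1 - kl.2).toNat

/-- The set `𝒦 = {(x,y) : K(x,y) = 0, |x| = |y| ≤ 1}`. -/
def QuadrantWalk.kerSet (w : QuadrantWalk) : Set (ℂ × ℂ) :=
  {q | w.K q.1 q.2 = 0 ∧ ‖q.1‖ = ‖q.2‖ ∧ ‖q.1‖ ≤ 1}

/-- The curve `S₁`, the projection of `𝒦` along the first coordinate. -/
def QuadrantWalk.S1 (w : QuadrantWalk) : Set ℂ :=
  {x | ∃ y : ℂ, (x, y) ∈ w.kerSet}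

/-- The curve `S₂`, the projection of `𝒦` along the second coordinate. -/
def QuadrantWalk.S2 (w : QuadrantWalk) : Set ℂ :=
  {y | ∃ x : ℂ, (x, y) ∈ w.kerSet}

/-- The angle `θ = arccos( -Σ kℓ p_{k,ℓ} / (√(Σ k² p_{k,ℓ}) √(Σ ℓ² p_{k,ℓ})) )`. -/
noncomputable def QuadrantWalk.theta (w : QuadrantWalk) : ℝ :=
  Real.arccos (-(∑ kl ∈ w.p.support, (kl.1 : ℝ) * (kl.2 : ℝ) * w.p kl) /
    (Real.sqrt (∑ kl ∈ w.p.support, (kl.1 : ℝ) ^ 2 * w.p kl) *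
      Real.sqrt (∑ kl ∈ w.p.support, (kl.2 : ℝ) ^ 2 * w.p kl)))

/-- The quantity `√( Σ p_{k,ℓ}(k-ℓ)² / Σ p_{k,ℓ}(k+ℓ)² )`. -/
noncomputable def QuadrantWalk.slope (w : QuadrantWalk) : ℝ :=
  Real.sqrt ((∑ kl ∈ w.p.support, ((kl.1 : ℝ) - (kl.2 : ℝ)) ^ 2 * w.p kl) /
    (∑ kl ∈ w.p.support, ((kl.1 : ℝ) + (kl.2 : ℝ)) ^ 2 * w.p kl))

theorem tendsto_div_sq_nhdsGT_of_hasDerivAt {φ φ' : ℝ → ℝ} {L : ℝ}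
    (hφ : ∀ x, HasDerivAt φ (φ' x) x) (hφ0 : φ 0 = 0) (hφ'0 : φ' 0 = 0)
    (hφ' : HasDerivAt φ' L 0) :
    Tendsto (fun x => φ x / x ^ 2) (𝓝[>] 0) (𝓝 (L / 2)) := by
  have hslope : Tendsto (fun x => φ' x / (2 * x)) (𝓝[>] 0) (𝓝 (L / 2)) := by
    refine (((hasDerivAt_iff_tendsto_slope.1 hφ').mono_left
      (nhdsGT_le_nhdsNE 0)).div_const 2).congr fun x => ?_
    rw [slope_def_field, hφ'0, sub_zero, sub_zero, div_div, mul_comm]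
  refine HasDerivAt.lhopital_zero_nhdsGT (.of_forall hφ)
    (.of_forall fun x => by simpa using hasDerivAt_pow 2 x) ?_ ?_ ?_ hslope
  · filter_upwards [self_mem_nhdsWithin] with x (hx : 0 < x)
    positivity
  · simpa [hφ0] using (hφ 0).continuousAt.tendsto.mono_left nhdsWithin_le_nhds
  · simpa using ((continuous_pow 2).tendsto (0 : ℝ)).mono_left nhdsWithin_le_nhds

lemma hasDerivAt_one_add_mul_pow_mul_cos (n : ℕ) (t c x : ℝ) :
    HasDerivAt (fun y => (1 + t * y) ^ n * Real.cos (c * y))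
      (n * t * (1 + t * x) ^ (n - 1) * Real.cos (c * x)
        - c * (1 + t * x) ^ n * Real.sin (c * x)) x := by
  have hline : HasDerivAt (fun y => 1 + t * y) t x := by
    simpa using ((hasDerivAt_id x).const_mul t).const_add 1
  have hcos : HasDerivAt (fun y => Real.cos (c * y)) (-Real.sin (c * x) * c) x := by
    simpa using ((hasDerivAt_id x).const_mul c).cos
  exact ((hline.fun_pow n).mul hcos).congr_deriv (by ring)

lemma hasDerivAt_deriv_one_add_mul_pow_mul_cos_zero (n : ℕ) (t c : ℝ) :
    HasDerivAt (fun y => n * t * (1 + t * y) ^ (n - 1) * Real.cos (c * y)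
        - c * (1 + t * y) ^ n * Real.sin (c * y))
      (n * (n - 1) * t ^ 2 - c ^ 2) 0 := by
  have hline : HasDerivAt (fun y => 1 + t * y) t 0 := by
    simpa using ((hasDerivAt_id (0 : ℝ)).const_mul t).const_add 1
  have hcos : HasDerivAt (fun y => Real.cos (c * y)) (-Real.sin (c * 0) * c) 0 := by
    simpa using ((hasDerivAt_id (0 : ℝ)).const_mul c).cos
  have hsin : HasDerivAt (fun y => Real.sin (c * y)) (Real.cos (c * 0) * c) 0 := by
    simpa using ((hasDerivAt_id (0 : ℝ)).const_mul c).sin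
  refine ((((hline.fun_pow (n - 1)).const_mul (n * t)).mul hcos).fun_sub
    (((hline.fun_pow n).const_mul c).mul hsin)).congr_deriv ?_
  -- `n - 1` is truncated subtraction in `ℕ`; for `n = 0` the factor `n` kills the term
  rcases n with _ | n
  · simp [sq]
  · simp only [Nat.cast_add, Nat.cast_one, add_tsub_cancel_right, mul_zero, add_zero, one_pow,
      mul_one, Real.cos_zero, Real.sin_zero, neg_zero, zero_mul, one_mul, zero_add]
    ring

lemma tendsto_exp_I_mul_sub_one_div :
    Tendsto (fun x : ℝ => (Complex.exp (Complex.I * x) - 1) / x) (𝓝[≠] 0) (𝓝 Complex.I) := by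
  have hderiv : HasDerivAt (fun x : ℝ => Complex.exp (Complex.I * x)) Complex.I 0 := by
    simpa using (((hasDerivAt_id (0 : ℂ)).const_mul Complex.I).cexp).comp_ofReal
  refine (hasDerivAt_iff_tendsto_slope.1 hderiv).congr fun x => ?_
  rw [slope_def_module, Complex.real_smul, Complex.ofReal_inv, div_eq_inv_mul]
  simp

lemma tendsto_div_norm_of_tendsto_div {α : Type*} {l : Filter α} {f : α → ℂ} {c : α → ℝ}
    {u : ℂ} (hu : u ≠ 0) (hc : ∀ᶠ x in l, 0 < c x)
    (h : Tendsto (fun x => f x / c x) l (𝓝 u)) :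
    Tendsto (fun x => f x / (‖f x‖ : ℂ)) l (𝓝 (u / (‖u‖ : ℂ))) := by
  have hcont : ContinuousAt (fun z : ℂ => z / (‖z‖ : ℂ)) u :=
    continuousAt_id.div (Complex.continuous_ofReal.comp continuous_norm).continuousAt
      (by simpa using hu)
  refine (hcont.tendsto.comp h).congr' ?_
  filter_upwards [hc] with x hx
  simp only [Function.comp_apply, norm_div, Complex.norm_real, Real.norm_of_nonneg hx.le,
    Complex.ofReal_div]
  exact div_div_div_cancel_right₀ (Complex.ofReal_ne_zero.2 hx.ne') _ _

section Corner

variable {g : ℝ → ℝ} {r : ℝ}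

lemma tendsto_of_tendsto_one_sub_div_abs
    (h : Tendsto (fun x => (1 - g x) / |x|) (𝓝[≠] 0) (𝓝 r)) : Tendsto g (𝓝[≠] 0) (𝓝 1) := by
  have habs : Tendsto (fun x : ℝ => |x|) (𝓝[≠] 0) (𝓝 0) := by
    simpa using (continuous_abs.tendsto (0 : ℝ)).mono_left nhdsWithin_le_nhds
  have h' := tendsto_const_nhds (x := (1 : ℝ)).sub (h.mul habs)
  rw [mul_zero, sub_zero] at h'
  refine h'.congr' ?_
  filter_upwards [self_mem_nhdsWithin] with x (hx : x ≠ 0)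
  rw [div_mul_cancel₀ _ (abs_ne_zero.2 hx), sub_sub_cancel]

lemma tendsto_sub_one_div_nhdsGT (h : Tendsto (fun x => (1 - g x) / |x|) (𝓝[≠] 0) (𝓝 r)) :
    Tendsto (fun x : ℝ => ((g x : ℂ) - 1) / x) (𝓝[>] 0) (𝓝 (-r : ℂ)) := by
  have h' := ((h.mono_left (nhdsGT_le_nhdsNE 0)).neg).ofReal
  rw [Complex.ofReal_neg] at h'
  refine h'.congr' ?_
  filter_upwards [self_mem_nhdsWithin] with x (hx : 0 < x)
  rw [abs_of_pos hx]
  push_cast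
  ring

lemma tendsto_sub_one_div_nhdsLT (h : Tendsto (fun x => (1 - g x) / |x|) (𝓝[≠] 0) (𝓝 r)) :
    Tendsto (fun x : ℝ => ((g x : ℂ) - 1) / x) (𝓝[<] 0) (𝓝 (r : ℂ)) := by
  refine ((h.mono_left (nhdsLT_le_nhdsNE 0)).ofReal).congr' ?_
  filter_upwards [self_mem_nhdsWithin] with x (hx : x < 0)
  rw [abs_of_neg hx]
  push_cast
  ring

lemma tendsto_mul_exp_sub_one_div {l : Filter ℝ} (hl : l ≤ 𝓝[≠] 0) {a : ℂ}
    (hg : Tendsto g l (𝓝 1)) (ha : Tendsto (fun x : ℝ => ((g x : ℂ) - 1) / x) l (𝓝 a)) :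
    Tendsto (fun x : ℝ => ((g x : ℂ) * Complex.exp (Complex.I * x) - 1) / x) l
      (𝓝 (a + Complex.I)) := by
  have h := ha.add (hg.ofReal.mul (tendsto_exp_I_mul_sub_one_div.mono_left hl))
  rw [Complex.ofReal_one, one_mul] at h
  refine h.congr' ?_
  filter_upwards [hl self_mem_nhdsWithin] with x (hx : x ≠ 0)
  field_simp
  ring

lemma tendsto_sub_one_div_exp_sub_one
    (h : Tendsto (fun x => (1 - g x) / |x|) (𝓝[≠] 0) (𝓝 r)) :
    Tendsto (fun x : ℝ => ((g x : ℂ) - 1) / (Complex.exp (Complex.I * x) - 1)) (𝓝[>] 0)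
      (𝓝 (Complex.I * r)) := by
  have h' := (tendsto_sub_one_div_nhdsGT h).div (tendsto_exp_I_mul_sub_one_div.mono_left
    (nhdsGT_le_nhdsNE 0)) Complex.I_ne_zero
  rw [show -(r : ℂ) / Complex.I = Complex.I * r by rw [div_I]; ring] at h'
  refine h'.congr' ?_
  filter_upwards [self_mem_nhdsWithin] with x (hx : 0 < x)
  exact div_div_div_cancel_right₀ (Complex.ofReal_ne_zero.2 hx.ne') _ _

lemma tendsto_normalized_secant_nhdsGT (h : Tendsto (fun x => (1 - g x) / |x|) (𝓝[≠] 0) (𝓝 r)) :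
    Tendsto (fun x : ℝ => ((g x : ℂ) * Complex.exp (Complex.I * x) - 1) /
        (‖(g x : ℂ) * Complex.exp (Complex.I * x) - 1‖ : ℂ)) (𝓝[>] 0)
      (𝓝 ((-(r : ℂ) + Complex.I) / (‖-(r : ℂ) + Complex.I‖ : ℂ))) := by
  have hGT : 𝓝[>] (0 : ℝ) ≤ 𝓝[≠] 0 := nhdsGT_le_nhdsNE 0
  refine tendsto_div_norm_of_tendsto_div (c := id) (by simp [Complex.ext_iff])
    self_mem_nhdsWithin ?_
  exact tendsto_mul_exp_sub_one_div hGT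
    ((tendsto_of_tendsto_one_sub_div_abs h).mono_left hGT) (tendsto_sub_one_div_nhdsGT h)

lemma tendsto_normalized_secant_nhdsLT (h : Tendsto (fun x => (1 - g x) / |x|) (𝓝[≠] 0) (𝓝 r)) :
    Tendsto (fun x : ℝ => ((g x : ℂ) * Complex.exp (Complex.I * x) - 1) /
        (‖(g x : ℂ) * Complex.exp (Complex.I * x) - 1‖ : ℂ)) (𝓝[<] 0)
      (𝓝 ((-(r : ℂ) - Complex.I) / (‖-(r : ℂ) - Complex.I‖ : ℂ))) := by
  have hLT : 𝓝[<] (0 : ℝ) ≤ 𝓝[≠] 0 := nhdsLT_le_nhdsNE 0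
  have hv := (tendsto_mul_exp_sub_one_div hLT ((tendsto_of_tendsto_one_sub_div_abs h).mono_left
    hLT) (tendsto_sub_one_div_nhdsLT h)).neg
  rw [neg_add'] at hv
  refine tendsto_div_norm_of_tendsto_div (c := fun x => -x) (by simp [Complex.ext_iff])
    (eventually_mem_nhdsWithin.mono fun x (hx : x < 0) => neg_pos.2 hx) (hv.congr fun x => ?_)
  rw [Complex.ofReal_neg, div_neg]

end Corner

lemma angle_neg_add_I_neg_sub_I (r : ℝ) :
    InnerProductGeometry.angle (-(r : ℂ) + Complex.I) (-(r : ℂ) - Complex.I)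
      = Real.arccos ((r ^ 2 - 1) / (r ^ 2 + 1)) := by
  have hu : ‖-(r : ℂ) + Complex.I‖ = √(r ^ 2 + 1) := by
    simp [Complex.norm_def, Complex.normSq_apply, sq]
  have hv : ‖-(r : ℂ) - Complex.I‖ = √(r ^ 2 + 1) := by
    simp [Complex.norm_def, Complex.normSq_apply, sq]
  rw [InnerProductGeometry.angle, hu, hv,
    Real.mul_self_sqrt (by positivity), Complex.inner]
  congr 2
  simp [sq]

namespace QuadrantWalk

/-- The total degree of the monomial `x ^ (1 - k) * y ^ (1 - ℓ)` of the kernel. -/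
def totalDeg (kl : ℤ × ℤ) : ℕ := (1 - kl.1).toNat + (1 - kl.2).toNat

lemma totalDeg_swap (kl : ℤ × ℤ) : totalDeg kl.swap = totalDeg kl := Nat.add_comm _ _

variable (w : QuadrantWalk)

noncomputable def sumMoment : ℝ := ∑ kl ∈ w.p.support, ((kl.1 : ℝ) + kl.2) ^ 2 * w.p kl

noncomputable def diffMoment : ℝ := ∑ kl ∈ w.p.support, ((kl.1 : ℝ) - kl.2) ^ 2 * w.p kl

lemma le_one_of_mem_support {kl : ℤ × ℤ} (h : kl ∈ w.p.support) : kl.1 ≤ 1 ∧ kl.2 ≤ 1 := by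
  rw [Finsupp.mem_support_iff] at h
  constructor <;> by_contra hk <;> exact h (w.small kl.1 kl.2 (by omega))

lemma pos_of_mem_support {kl : ℤ × ℤ} (h : kl ∈ w.p.support) : 0 < w.p kl :=
  (w.nonneg kl).lt_of_ne (Finsupp.mem_support_iff.1 h).symm

lemma totalDeg_eq {kl : ℤ × ℤ} (h : kl ∈ w.p.support) :
    (totalDeg kl : ℝ) = 2 - kl.1 - kl.2 := by
  obtain ⟨h1, h2⟩ := w.le_one_of_mem_support h
  have : (totalDeg kl : ℤ) = 2 - kl.1 - kl.2 := by
    simp only [totalDeg, Nat.cast_add, Int.toNat_of_nonneg (sub_nonneg.2 h1),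
      Int.toNat_of_nonneg (sub_nonneg.2 h2)]
    ring
  exact_mod_cast this

lemma p_swap (kl : ℤ × ℤ) : w.p kl.swap = w.p kl := (w.symm kl.1 kl.2).symm

lemma sum_swap {M : Type*} [AddCommMonoid M] (f : ℤ × ℤ → M) :
    ∑ kl ∈ w.p.support, f kl.swap = ∑ kl ∈ w.p.support, f kl :=
  Finset.sum_equiv (Equiv.prodComm ℤ ℤ)
    (fun kl => by simp only [Finsupp.mem_support_iff, Equiv.prodComm_apply, p_swap])
    (fun _ _ => rfl)

lemma sum_snd_sq_mul : ∑ kl ∈ w.p.support, (kl.2 : ℝ) ^ 2 * w.p kl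
    = ∑ kl ∈ w.p.support, (kl.1 : ℝ) ^ 2 * w.p kl := by
  rw [← w.sum_swap]
  simp only [Prod.snd_swap, p_swap]

lemma sumMoment_eq : w.sumMoment = 2 * ∑ kl ∈ w.p.support, (kl.1 : ℝ) ^ 2 * w.p kl
    + 2 * ∑ kl ∈ w.p.support, (kl.1 : ℝ) * kl.2 * w.p kl := by
  have h (kl : ℤ × ℤ) : ((kl.1 : ℝ) + kl.2) ^ 2 * w.p kl = (kl.1 : ℝ) ^ 2 * w.p kl
      + (kl.2 : ℝ) ^ 2 * w.p kl + 2 * ((kl.1 : ℝ) * kl.2 * w.p kl) := by ring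
  simp only [sumMoment, h, Finset.sum_add_distrib, ← Finset.mul_sum, sum_snd_sq_mul]
  ring

lemma diffMoment_eq : w.diffMoment = 2 * ∑ kl ∈ w.p.support, (kl.1 : ℝ) ^ 2 * w.p kl
    - 2 * ∑ kl ∈ w.p.support, (kl.1 : ℝ) * kl.2 * w.p kl := by
  have h (kl : ℤ × ℤ) : ((kl.1 : ℝ) - kl.2) ^ 2 * w.p kl = (kl.1 : ℝ) ^ 2 * w.p kl
      + (kl.2 : ℝ) ^ 2 * w.p kl - 2 * ((kl.1 : ℝ) * kl.2 * w.p kl) := by ring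
  simp only [diffMoment, h, Finset.sum_add_distrib, Finset.sum_sub_distrib, ← Finset.mul_sum,
    sum_snd_sq_mul]
  ring

lemma sum_mul_totalDeg : ∑ kl ∈ w.p.support, w.p kl * totalDeg kl = 2 := by
  calc ∑ kl ∈ w.p.support, w.p kl * totalDeg kl
      = ∑ kl ∈ w.p.support, (2 * w.p kl - (kl.1 * w.p kl + kl.2 * w.p kl)) :=
        Finset.sum_congr rfl fun kl h => by rw [w.totalDeg_eq h]; ring
    _ = 2 := by
        rw [Finset.sum_sub_distrib, Finset.sum_add_distrib, ← Finset.mul_sum, w.sum_one,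
          w.drift1, w.drift2]
        ring

lemma sum_mul_totalDeg_mul_pred :
    ∑ kl ∈ w.p.support, w.p kl * (totalDeg kl * (totalDeg kl - 1 : ℝ)) = 2 + w.sumMoment := by
  calc ∑ kl ∈ w.p.support, w.p kl * (totalDeg kl * (totalDeg kl - 1 : ℝ))
      = ∑ kl ∈ w.p.support, (2 * w.p kl - 3 * (kl.1 * w.p kl + kl.2 * w.p kl)
          + ((kl.1 : ℝ) + kl.2) ^ 2 * w.p kl) :=
        Finset.sum_congr rfl fun kl h => by rw [w.totalDeg_eq h]; ring
    _ = 2 + w.sumMoment := by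
        rw [Finset.sum_add_distrib, Finset.sum_sub_distrib, ← Finset.mul_sum, ← Finset.mul_sum,
          Finset.sum_add_distrib, w.sum_one, w.drift1, w.drift2, sumMoment]
        ring

lemma exists_mem_support_zpow_mul_zpow_ne_one {x y : ℂ} (hx : ‖x‖ = 1) (hy : ‖y‖ = 1)
    (hxy : ¬(x = 1 ∧ y = 1)) : ∃ kl ∈ w.p.support, x ^ kl.1 * y ^ kl.2 ≠ 1 := by
  by_contra! h
  refine hxy (w.irred x y hx hy ?_)
  have hsum : ∑ kl ∈ w.p.support, (w.p kl : ℂ) * x ^ kl.1 * y ^ kl.2 = 1 := by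
    rw [← Complex.ofReal_one, ← w.sum_one, Complex.ofReal_sum]
    exact Finset.sum_congr rfl fun kl hkl => by rw [mul_assoc, h kl hkl, mul_one]
  rw [hsum, norm_one]

lemma sumMoment_pos : 0 < w.sumMoment := by
  obtain ⟨kl, hkl, hne⟩ := w.exists_mem_support_zpow_mul_zpow_ne_one (x := -1) (y := -1)
    (by simp) (by simp) (by norm_num)
  have hsum : (kl.1 : ℝ) + kl.2 ≠ 0 := by
    rw [← zpow_add₀ (by norm_num)] at hne
    exact_mod_cast fun h => hne (by rw [h, zpow_zero])
  exact Finset.sum_pos' (fun kl _ => mul_nonneg (sq_nonneg _) (w.nonneg kl))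
    ⟨kl, hkl, mul_pos (by positivity) (w.pos_of_mem_support hkl)⟩

lemma diffMoment_pos : 0 < w.diffMoment := by
  obtain ⟨kl, hkl, hne⟩ := w.exists_mem_support_zpow_mul_zpow_ne_one (x := Complex.I)
    (y := -Complex.I) (by simp) (by simp) (by simp [Complex.ext_iff])
  have hdiff : (kl.1 : ℝ) - kl.2 ≠ 0 := by
    rw [sub_ne_zero]
    exact_mod_cast fun h => hne (by rw [h, ← mul_zpow]; simp)
  exact Finset.sum_pos' (fun kl _ => mul_nonneg (sq_nonneg _) (w.nonneg kl))
    ⟨kl, hkl, mul_pos (by positivity) (w.pos_of_mem_support hkl)⟩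

lemma slope_pos : 0 < w.slope := Real.sqrt_pos.2 (div_pos w.diffMoment_pos w.sumMoment_pos)

lemma slope_sq : w.slope ^ 2 = w.diffMoment / w.sumMoment :=
  Real.sq_sqrt (div_nonneg w.diffMoment_pos.le w.sumMoment_pos.le)

noncomputable def kernelDiag (z lam : ℝ) : ℝ :=
  z ^ 2 - ∑ kl ∈ w.p.support, w.p kl * z ^ totalDeg kl * Real.cos (((kl.2 : ℝ) - kl.1) * lam)

lemma kernelDiag_abs (z lam : ℝ) : w.kernelDiag z |lam| = w.kernelDiag z lam := by
  rcases abs_choice lam with h | h <;> simp only [kernelDiag, h, mul_neg, Real.cos_neg]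

lemma kernelDiag_one_zero : w.kernelDiag 1 0 = 0 := by
  simp [kernelDiag, w.sum_one]

lemma continuous_kernelDiag (lam : ℝ) : Continuous fun z => w.kernelDiag z lam := by
  unfold kernelDiag
  fun_prop

lemma mul_exp_pow_mul_mul_exp_inv_pow {kl : ℤ × ℤ} (h : kl ∈ w.p.support) (z lam : ℝ) :
    ((z : ℂ) * Complex.exp (Complex.I * lam)) ^ (1 - kl.1).toNat
        * ((z : ℂ) * (Complex.exp (Complex.I * lam))⁻¹) ^ (1 - kl.2).toNat
      = (z : ℂ) ^ totalDeg kl * Complex.exp ((((kl.2 : ℝ) - kl.1) * lam : ℝ) * Complex.I) := by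
  obtain ⟨h1, h2⟩ := w.le_one_of_mem_support h
  have e1 : (((1 - kl.1).toNat : ℕ) : ℝ) = 1 - kl.1 := by
    exact_mod_cast Int.toNat_of_nonneg (sub_nonneg.2 h1)
  have e2 : (((1 - kl.2).toNat : ℕ) : ℝ) = 1 - kl.2 := by
    exact_mod_cast Int.toNat_of_nonneg (sub_nonneg.2 h2)
  rw [mul_pow, mul_pow, ← Complex.exp_neg, ← Complex.exp_nat_mul, ← Complex.exp_nat_mul,
    mul_mul_mul_comm, ← pow_add, ← Complex.exp_add, totalDeg]
  congr 2
  rw [← Complex.ofReal_natCast, ← Complex.ofReal_natCast, e1, e2]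
  push_cast
  ring

-- By (H1), pairing `(k, ℓ)` with `(ℓ, k)` pairs each exponential with its conjugate.
lemma sum_mul_exp_eq_sum_mul_cos (z lam : ℝ) :
    ∑ kl ∈ w.p.support, (w.p kl : ℂ) * ((z : ℂ) ^ totalDeg kl
        * Complex.exp ((((kl.2 : ℝ) - kl.1) * lam : ℝ) * Complex.I))
      = ∑ kl ∈ w.p.support, ((w.p kl * z ^ totalDeg kl
        * Real.cos (((kl.2 : ℝ) - kl.1) * lam) : ℝ) : ℂ) := by
  set S := ∑ kl ∈ w.p.support, (w.p kl : ℂ) * ((z : ℂ) ^ totalDeg kl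
    * Complex.exp ((((kl.2 : ℝ) - kl.1) * lam : ℝ) * Complex.I))
  have hswap : S = ∑ kl ∈ w.p.support, (w.p kl : ℂ) * ((z : ℂ) ^ totalDeg kl
      * Complex.exp (-(((kl.2 : ℝ) - kl.1) * lam : ℝ) * Complex.I)) := by
    rw [← w.sum_swap]
    refine Finset.sum_congr rfl fun kl _ => ?_
    simp only [p_swap, totalDeg_swap, Prod.fst_swap, Prod.snd_swap]
    push_cast
    ring_nf
  apply mul_left_cancel₀ (two_ne_zero' ℂ)
  calc 2 * S = S + S := two_mul S
    _ = _ := by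
      nth_rw 2 [hswap]
      rw [← Finset.sum_add_distrib, Finset.mul_sum]
      refine Finset.sum_congr rfl fun kl _ => ?_
      generalize ((kl.2 : ℝ) - kl.1) * lam = θ
      push_cast
      linear_combination -(w.p kl : ℂ) * (z : ℂ) ^ totalDeg kl * Complex.two_cos θ

lemma K_mul_exp (z lam : ℝ) :
    w.K ((z : ℂ) * Complex.exp (Complex.I * lam)) ((z : ℂ) * (Complex.exp (Complex.I * lam))⁻¹)
      = w.kernelDiag z lam := by
  have hs : Complex.exp (Complex.I * lam) ≠ 0 := Complex.exp_ne_zero _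
  rw [K, kernelDiag, Complex.ofReal_sub, Complex.ofReal_pow, Complex.ofReal_sum,
    ← w.sum_mul_exp_eq_sum_mul_cos]
  congr 1
  · field_simp
  · exact Finset.sum_congr rfl fun kl h => by rw [mul_assoc, w.mul_exp_pow_mul_mul_exp_inv_pow h]

noncomputable def kernelDiagDeriv (t lam : ℝ) : ℝ :=
  2 * t * (1 + t * lam) - ∑ kl ∈ w.p.support, w.p kl *
    (totalDeg kl * t * (1 + t * lam) ^ (totalDeg kl - 1) * Real.cos (((kl.2 : ℝ) - kl.1) * lam)
      - ((kl.2 : ℝ) - kl.1) * (1 + t * lam) ^ totalDeg kl * Real.sin (((kl.2 : ℝ) - kl.1) * lam))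

lemma hasDerivAt_kernelDiag_line (t lam : ℝ) :
    HasDerivAt (fun x => w.kernelDiag (1 + t * x) x) (w.kernelDiagDeriv t lam) lam := by
  have hsq : HasDerivAt (fun x => (1 + t * x) ^ 2) (2 * t * (1 + t * lam)) lam := by
    simpa [mul_comm] using hasDerivAt_one_add_mul_pow_mul_cos 2 t 0 lam
  have hsum := HasDerivAt.fun_sum (u := w.p.support) fun kl _ =>
    (hasDerivAt_one_add_mul_pow_mul_cos (totalDeg kl) t ((kl.2 : ℝ) - kl.1) lam).const_mul
      (w.p kl)
  simp only [← mul_assoc] at hsum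
  exact hsq.fun_sub hsum

lemma kernelDiagDeriv_zero (t : ℝ) : w.kernelDiagDeriv t 0 = 0 := by
  simp only [kernelDiagDeriv, mul_zero, add_zero, one_pow, mul_one, Real.cos_zero, Real.sin_zero,
    sub_zero, ← mul_assoc, ← Finset.sum_mul, sum_mul_totalDeg]
  ring

lemma hasDerivAt_kernelDiagDeriv (t : ℝ) :
    HasDerivAt (w.kernelDiagDeriv t) (w.diffMoment - w.sumMoment * t ^ 2) 0 := by
  have hlin : HasDerivAt (fun x => 2 * t * (1 + t * x)) (2 * t ^ 2) 0 := by
    simpa [sq, mul_assoc] using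
      (((hasDerivAt_id (0 : ℝ)).const_mul t).const_add 1).const_mul (2 * t)
  refine (hlin.fun_sub (HasDerivAt.fun_sum (u := w.p.support) fun kl _ =>
    (hasDerivAt_deriv_one_add_mul_pow_mul_cos_zero (totalDeg kl) t ((kl.2 : ℝ) - kl.1)).const_mul
      (w.p kl))).congr_deriv ?_
  have hsum : ∑ kl ∈ w.p.support, w.p kl * (totalDeg kl * (totalDeg kl - 1 : ℝ) * t ^ 2
      - ((kl.2 : ℝ) - kl.1) ^ 2) = (2 + w.sumMoment) * t ^ 2 - w.diffMoment := by
    rw [← w.sum_mul_totalDeg_mul_pred, Finset.sum_mul, diffMoment, ← Finset.sum_sub_distrib]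
    exact Finset.sum_congr rfl fun kl _ => by ring
  rw [hsum]
  ring

lemma tendsto_kernelDiag_div_sq (t : ℝ) :
    Tendsto (fun lam => w.kernelDiag (1 + t * |lam|) lam / lam ^ 2) (𝓝[≠] 0)
      (𝓝 ((w.diffMoment - w.sumMoment * t ^ 2) / 2)) := by
  have h := tendsto_div_sq_nhdsGT_of_hasDerivAt (w.hasDerivAt_kernelDiag_line t)
    (by simpa using w.kernelDiag_one_zero) (w.kernelDiagDeriv_zero t)
    (w.hasDerivAt_kernelDiagDeriv t)
  refine (h.comp tendsto_abs_nhdsNE_zero).congr fun lam => ?_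
  simp only [Function.comp_apply, kernelDiag_abs, sq_abs]

lemma eventually_kernelDiag_neg {t : ℝ} (ht : w.diffMoment < w.sumMoment * t ^ 2) :
    ∀ᶠ lam in 𝓝[≠] 0, w.kernelDiag (1 + t * |lam|) lam < 0 := by
  filter_upwards [(w.tendsto_kernelDiag_div_sq t).eventually_lt_const
    (show (w.diffMoment - w.sumMoment * t ^ 2) / 2 < 0 by linarith)] with lam h
  exact neg_of_div_neg_left h (sq_nonneg lam)

lemma eventually_kernelDiag_pos {t : ℝ} (ht : w.sumMoment * t ^ 2 < w.diffMoment) :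
    ∀ᶠ lam in 𝓝[≠] 0, 0 < w.kernelDiag (1 + t * |lam|) lam := by
  filter_upwards [(w.tendsto_kernelDiag_div_sq t).eventually_const_lt
    (show 0 < (w.diffMoment - w.sumMoment * t ^ 2) / 2 by linarith),
    self_mem_nhdsWithin] with lam h (hlam : lam ≠ 0)
  exact (div_pos_iff_of_pos_right (by positivity)).1 h

lemma eq_of_K_mul_eq_zero (η : ℂ → ℝ)
    (hη0 : w.p (1, 1) = 0 → ∀ s : ℂ, ‖s‖ = 1 →
      η s ∈ Set.Icc (-1 : ℝ) 1 ∧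
      (∀ z : ℂ, ‖z‖ ≤ 1 →
        (w.K (z * s) (z * s⁻¹) = 0 ↔ z = 0 ∨ z = (η s : ℂ))))
    (hη1 : w.p (1, 1) ≠ 0 → ∀ s : ℂ, ‖s‖ = 1 →
      0 < η s ∧ η s ≤ 1 ∧ w.K ((η s : ℂ) * s) ((η s : ℂ) * s⁻¹) = 0 ∧
      (∀ z : ℝ, 0 < z → z ≤ 1 →
        w.K ((z : ℂ) * s) ((z : ℂ) * s⁻¹) = 0 → z = η s))
    {s : ℂ} (hs : ‖s‖ = 1) {z : ℝ} (hz0 : 0 < z) (hz1 : z ≤ 1)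
    (hK : w.K ((z : ℂ) * s) ((z : ℂ) * s⁻¹) = 0) : z = η s := by
  by_cases hp : w.p (1, 1) = 0
  · have hz : ‖(z : ℂ)‖ ≤ 1 := by rwa [Complex.norm_real, Real.norm_of_nonneg hz0.le]
    rcases ((hη0 hp s hs).2 z hz).1 hK with h | h
    · exact absurd (Complex.ofReal_eq_zero.1 h) hz0.ne'
    · exact Complex.ofReal_inj.1 h
  · exact (hη1 hp s hs).2.2.2 z hz0 hz1 hK

-- For small `λ ≠ 0` the kernel changes sign on this interval, so its unique root `η` lies in it.
lemma eventually_mem_Icc_of_unique_root (η : ℂ → ℝ)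
    (huniq : ∀ s : ℂ, ‖s‖ = 1 → ∀ z : ℝ, 0 < z → z ≤ 1 →
      w.K ((z : ℂ) * s) ((z : ℂ) * s⁻¹) = 0 → z = η s)
    {ε : ℝ} (hε : 0 < ε) (hεr : ε ≤ w.slope) :
    ∀ᶠ lam in 𝓝[≠] (0 : ℝ), η (Complex.exp (Complex.I * lam))
      ∈ Icc (1 - (w.slope + ε) * |lam|) (1 - (w.slope - ε) * |lam|) := by
  have hr := w.slope_pos
  have hS := w.sumMoment_pos
  have hslope : w.sumMoment * w.slope ^ 2 = w.diffMoment := by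
    rw [slope_sq, mul_div_cancel₀ _ hS.ne']
  have hsmall : ∀ᶠ lam in 𝓝[≠] (0 : ℝ), (w.slope + ε) * |lam| < 1 := by
    have h : Tendsto (fun lam : ℝ => (w.slope + ε) * |lam|) (𝓝 0) (𝓝 0) := by
      simpa using (continuous_abs.tendsto (0 : ℝ)).const_mul (w.slope + ε)
    exact (h.mono_left nhdsWithin_le_nhds).eventually_lt_const zero_lt_one
  filter_upwards [w.eventually_kernelDiag_neg (t := -(w.slope + ε))
      (by rw [neg_sq]; nlinarith [mul_pos hS (mul_pos hε (by linarith : 0 < 2 * w.slope + ε))]),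
    w.eventually_kernelDiag_pos (t := -(w.slope - ε))
      (by rw [neg_sq]; nlinarith [mul_pos hS (mul_pos hε (by linarith : 0 < 2 * w.slope - ε))]),
    hsmall]
    with lam hlo hhi hlam
  simp only [neg_mul, ← sub_eq_add_neg] at hlo hhi
  obtain ⟨z, hz, hz0⟩ := intermediate_value_Icc (by nlinarith [abs_nonneg lam])
    (w.continuous_kernelDiag lam).continuousOn ⟨hlo.le, hhi.le⟩
  have hK : w.K ((z : ℂ) * Complex.exp (Complex.I * lam))
      ((z : ℂ) * (Complex.exp (Complex.I * lam))⁻¹) = 0 := by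
    rw [K_mul_exp]
    exact_mod_cast hz0
  rwa [← huniq _ (Complex.norm_exp_I_mul_ofReal lam) z (by linarith [hz.1])
    (by nlinarith [hz.2, abs_nonneg lam]) hK]

theorem tendsto_one_sub_div_abs_of_unique_root (η : ℂ → ℝ)
    (huniq : ∀ s : ℂ, ‖s‖ = 1 → ∀ z : ℝ, 0 < z → z ≤ 1 →
      w.K ((z : ℂ) * s) ((z : ℂ) * s⁻¹) = 0 → z = η s) :
    Tendsto (fun lam : ℝ => (1 - η (Complex.exp (Complex.I * lam))) / |lam|) (𝓝[≠] 0)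
      (𝓝 w.slope) := by
  rw [Metric.tendsto_nhds]
  intro ε hε
  set δ := min (ε / 2) w.slope
  have hδ : 0 < δ := lt_min (by linarith) w.slope_pos
  have hδε : δ < ε := (min_le_left _ _).trans_lt (by linarith)
  filter_upwards [w.eventually_mem_Icc_of_unique_root η huniq hδ (min_le_right _ _),
    self_mem_nhdsWithin] with lam ⟨hlo, hhi⟩ (hlam : lam ≠ 0)
  have habs : 0 < |lam| := abs_pos.2 hlam
  have hle : (1 - η (Complex.exp (Complex.I * lam))) / |lam| ≤ w.slope + δ := by
    rw [div_le_iff₀ habs]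
    linarith
  have hge : w.slope - δ ≤ (1 - η (Complex.exp (Complex.I * lam))) / |lam| := by
    rw [le_div_iff₀ habs]
    linarith
  rw [Real.dist_eq, abs_sub_lt_iff]
  constructor <;> linarith

lemma theta_eq : w.theta = Real.arccos ((w.slope ^ 2 - 1) / (w.slope ^ 2 + 1)) := by
  rw [theta, sum_snd_sq_mul, slope_sq, div_sub_one w.sumMoment_pos.ne',
    div_add_one w.sumMoment_pos.ne', div_div_div_cancel_right₀ w.sumMoment_pos.ne',
    w.sumMoment_eq, w.diffMoment_eq]
  set A := ∑ kl ∈ w.p.support, (kl.1 : ℝ) ^ 2 * w.p kl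
  set B := ∑ kl ∈ w.p.support, (kl.1 : ℝ) * kl.2 * w.p kl
  have hA : 0 < A := by
    linarith [w.sumMoment_pos, w.diffMoment_pos, w.sumMoment_eq, w.diffMoment_eq]
  rw [Real.mul_self_sqrt hA.le]
  congr 1
  rw [div_eq_div_iff hA.ne' (by linarith)]
  ring

end QuadrantWalk

theorem statement5_general (w : QuadrantWalk) (η : ℂ → ℝ)
    (hη0 : w.p (1, 1) = 0 → ∀ s : ℂ, ‖s‖ = 1 →
      η s ∈ Set.Icc (-1 : ℝ) 1 ∧
      (∀ z : ℂ, ‖z‖ ≤ 1 →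
        (w.K (z * s) (z * s⁻¹) = 0 ↔ z = 0 ∨ z = (η s : ℂ))))
    (hη1 : w.p (1, 1) ≠ 0 → ∀ s : ℂ, ‖s‖ = 1 →
      0 < η s ∧ η s ≤ 1 ∧ w.K ((η s : ℂ) * s) ((η s : ℂ) * s⁻¹) = 0 ∧
      (∀ z : ℝ, 0 < z → z ≤ 1 →
        w.K ((z : ℂ) * s) ((z : ℂ) * s⁻¹) = 0 → z = η s)) :
    Tendsto (fun lam : ℝ =>
        ((η (Complex.exp (Complex.I * lam)) : ℂ) - 1) / (Complex.exp (Complex.I * lam) - 1))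
      (nhdsWithin 0 (Set.Ioi 0)) (𝓝 (Complex.I * (w.slope : ℂ))) ∧
    Tendsto (fun lam : ℝ =>
        ((η (Complex.exp (Complex.I * lam)) : ℂ) * Complex.exp (Complex.I * lam) - 1) /
          ((‖(η (Complex.exp (Complex.I * lam)) : ℂ) *
            Complex.exp (Complex.I * lam) - 1‖ : ℝ) : ℂ))
      (nhdsWithin 0 (Set.Ioi 0))
      (𝓝 ((-(w.slope : ℂ) + Complex.I) /
        ((‖-(w.slope : ℂ) + Complex.I‖ : ℝ) : ℂ))) ∧
    Tendsto (fun lam : ℝ =>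
        ((η (Complex.exp (Complex.I * lam)) : ℂ) * Complex.exp (Complex.I * lam) - 1) /
          ((‖(η (Complex.exp (Complex.I * lam)) : ℂ) *
            Complex.exp (Complex.I * lam) - 1‖ : ℝ) : ℂ))
      (nhdsWithin 0 (Set.Iio 0))
      (𝓝 ((-(w.slope : ℂ) - Complex.I) /
        ((‖-(w.slope : ℂ) - Complex.I‖ : ℝ) : ℂ))) ∧
    InnerProductGeometry.angle (-(w.slope : ℂ) + Complex.I) (-(w.slope : ℂ) - Complex.I)
      = w.theta := by
  have h := w.tendsto_one_sub_div_abs_of_unique_root η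
    fun s hs z hz0 hz1 hK => w.eq_of_K_mul_eq_zero η hη0 hη1 hs hz0 hz1 hK
  exact ⟨tendsto_sub_one_div_exp_sub_one h, tendsto_normalized_secant_nhdsGT h,
    tendsto_normalized_secant_nhdsLT h, by rw [angle_neg_add_I_neg_sub_I, w.theta_eq]⟩

/-- right differentiability of `η` at `s = 1` along the unit circle, with
right derivative `i·√(Σ p_{k,ℓ}(k-ℓ)²/Σ p_{k,ℓ}(k+ℓ)²)`; consequently the curve `S₁`
has a corner at `1`: the parametrization `λ ↦ η(e^{iλ})e^{iλ}` admits one-sided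
tangent rays at `1` in the directions `u = -slope + i` (from above) and
`v = -slope - i` (from below), and the angle between `u` and `v` (the interior angle
of `S₁` at `1`) equals `θ`.  Here `η(s)` is the distinguished root of
`K(ηs, ηs⁻¹) = 0` in the closed unit disk: the root besides the identically-zero one
when `p_{1,1} = 0`, and the positive root when `p_{1,1} ≠ 0`. -/
theorem statement5 (w : QuadrantWalk) (η : ℂ → ℝ)
    (hη0 : w.p (1, 1) = 0 → ∀ s : ℂ, ‖s‖ = 1 →
      η s ∈ Set.Icc (-1 : ℝ) 1 ∧
      (∀ z : ℂ, ‖z‖ ≤ 1 →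
        (w.K (z * s) (z * s⁻¹) = 0 ↔ z = 0 ∨ z = (η s : ℂ))))
    (hη1 : w.p (1, 1) ≠ 0 → ∀ s : ℂ, ‖s‖ = 1 →
      0 < η s ∧ η s ≤ 1 ∧ w.K ((η s : ℂ) * s) ((η s : ℂ) * s⁻¹) = 0 ∧
      (∀ z : ℝ, 0 < z → z ≤ 1 →
        w.K ((z : ℂ) * s) ((z : ℂ) * s⁻¹) = 0 → z = η s))
    (hη_one : η 1 = 1) :
    Tendsto (fun lam : ℝ =>
        ((η (Complex.exp (Complex.I * lam)) : ℂ) - 1) / (Complex.exp (Complex.I * lam) - 1))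
      (nhdsWithin 0 (Set.Ioi 0)) (𝓝 (Complex.I * (w.slope : ℂ))) ∧
    Tendsto (fun lam : ℝ =>
        ((η (Complex.exp (Complex.I * lam)) : ℂ) * Complex.exp (Complex.I * lam) - 1) /
          ((‖(η (Complex.exp (Complex.I * lam)) : ℂ) *
            Complex.exp (Complex.I * lam) - 1‖ : ℝ) : ℂ))
      (nhdsWithin 0 (Set.Ioi 0))
      (𝓝 ((-(w.slope : ℂ) + Complex.I) /
        ((‖-(w.slope : ℂ) + Complex.I‖ : ℝ) : ℂ))) ∧
    Tendsto (fun lam : ℝ =>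
        ((η (Complex.exp (Complex.I * lam)) : ℂ) * Complex.exp (Complex.I * lam) - 1) /
          ((‖(η (Complex.exp (Complex.I * lam)) : ℂ) *
            Complex.exp (Complex.I * lam) - 1‖ : ℝ) : ℂ))
      (nhdsWithin 0 (Set.Iio 0))
      (𝓝 ((-(w.slope : ℂ) - Complex.I) /
        ((‖-(w.slope : ℂ) - Complex.I‖ : ℝ) : ℂ))) ∧
    InnerProductGeometry.angle (-(w.slope : ℂ) + Complex.I) (-(w.slope : ℂ) - Complex.I)
      = w.theta :=
  statement5_general w η hη0 hη1
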